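/- For any two full skew trees T1 and T2 with n internal nodes each, the skew rotation distance between T1 and T2 is at most n² (in particular, a rank-bounded path of length at most n² exists, so d_R(T1, T2) ≤ n²). -/

import Mathlib

/-- Full binary trees: every node is a leaf or has exactly two children.
`node l r` is an internal node with left subtree `l` and right subtree `r`. -/
inductive FBT : Type
  | leaf : FBT
  | node : FBT → FBT → FBT
  deriving DecidableEq

namespace FBT

/-- Number of internal nodes. -/
def internal : FBT → ℕ
  | leaf => 0
  | node l r => internal l + internal r + 1

/-- Height: maximum number of internal nodes on a root-to-leaf path. -/
def height : FBT → ℕ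
  | leaf => 0
  | node l r => max (height l) (height r) + 1

/-- Rank of a full binary tree (Ehrenfeucht–Haussler rank). -/
def rank : FBT → ℕ
  | leaf => 0
  | node l r => if rank l = rank r then rank l + 1 else max (rank l) (rank r)

/-- A full binary tree is skew if every internal node has at least one leaf child. -/
def skew : FBT → Prop
  | leaf => True
  | node l r => (l = leaf ∨ r = leaf) ∧ skew l ∧ skew r

/-- Pre-order traversal of the internal nodes, labeled by the in-order labeling
(1-indexed); `off` is the number of in-order labels used strictly to the left
of this subtree.  `T.preorderAux 0` is the tree permutation of `T`, as a list. -/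
def preorderAux : FBT → ℕ → List ℕ
  | leaf, _ => []
  | node l r, off =>
      (off + internal l + 1) :: (preorderAux l off ++ preorderAux r (off + internal l + 1))

/-- Number of internal nodes on the rightmost root-to-leaf path. -/
def rightPath : FBT → ℕ
  | leaf => 0
  | node _ r => rightPath r + 1

end FBT

/-- One (left or right) rotation, performed at some node of the tree. -/
inductive Rot : FBT → FBT → Prop
  | rotR (C D E : FBT) : Rot (FBT.node (FBT.node C D) E) (FBT.node C (FBT.node D E))
  | rotL (C D E : FBT) : Rot (FBT.node C (FBT.node D E)) (FBT.node (FBT.node C D) E)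
  | congrL {l l' : FBT} (r : FBT) : Rot l l' → Rot (FBT.node l r) (FBT.node l' r)
  | congrR {r r' : FBT} (l : FBT) : Rot r r' → Rot (FBT.node l r) (FBT.node l r')

/-- `RotChainP P k T1 T2`: there is a sequence of `k` rotations transforming `T1`
into `T2` in which every tree reached along the way satisfies `P`. -/
def RotChainP (P : FBT → Prop) : ℕ → FBT → FBT → Prop
  | 0, T1, T2 => T1 = T2
  | k+1, T1, T2 => ∃ T, Rot T1 T ∧ P T ∧ RotChainP P k T T2

/-- `RotChain k T1 T2`: `T1` can be transformed into `T2` by `k` rotations. -/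
def RotChain : ℕ → FBT → FBT → Prop := RotChainP fun _ => True

/-- The rotation distance between two full binary trees. -/
noncomputable def rotDist (T1 T2 : FBT) : ℕ := sInf {k | RotChain k T1 T2}

/-- The right comb on `n` internal nodes. -/
def rightComb : ℕ → FBT
  | 0 => FBT.leaf
  | n+1 => FBT.node FBT.leaf (rightComb n)

/-- The left comb on `n` internal nodes. -/
def leftComb : ℕ → FBT
  | 0 => FBT.leaf
  | n+1 => FBT.node (leftComb n) FBT.leaf

/-- The complete binary tree of height `r`. -/
def completeTree : ℕ → FBT
  | 0 => FBT.leaf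
  | r+1 => FBT.node (completeTree r) (completeTree r)

/-- Replace the leftmost leaf of the first tree by the second tree. -/
def attachLeftmost : FBT → FBT → FBT
  | FBT.leaf, S => S
  | FBT.node l r, S => FBT.node (attachLeftmost l S) r

/-- The transposition `δ_{i,j,k}` (1-indexed, `1 ≤ i < j < k`) applied to a list:
the consecutive blocks occupying positions `i..j-1` and `j..k-1` are swapped,
all other positions are left fixed. -/
def transposeList (i j k : ℕ) (l : List ℕ) : List ℕ :=
  l.take (i-1) ++ (l.drop (j-1)).take (k-j) ++ (l.drop (i-1)).take (j-i) ++ l.drop (k-1)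

/-- `δ_{i,j,k}` is a tree transposition (on permutations of `n` elements): there are
full binary trees `T1, T2` with `n` internal nodes each, at rotation distance `1`,
whose tree permutations `σ, τ` satisfy `δ_{i,j,k}(σ) = τ`. -/
def IsTreeTransposition (n i j k : ℕ) : Prop :=
  ∃ T1 T2 : FBT, T1.internal = n ∧ T2.internal = n ∧ rotDist T1 T2 = 1 ∧
    transposeList i j k (T1.preorderAux 0) = T2.preorderAux 0

/-- `σ` (a permutation of `Fin n`) is a tree permutation: the pre-order traversal of
some full binary tree with `n` internal nodes under the in-order labeling.
(Positions and values are converted to 1-indexed labels.) -/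
def IsTreePerm (n : ℕ) (σ : Equiv.Perm (Fin n)) : Prop :=
  ∃ T : FBT, T.internal = n ∧ T.preorderAux 0 = List.ofFn fun i => (σ i : ℕ) + 1

/-- `σ` is a skew permutation: the tree permutation of some full skew tree. -/
def IsSkewPerm (n : ℕ) (σ : Equiv.Perm (Fin n)) : Prop :=
  ∃ T : FBT, T.internal = n ∧ T.skew ∧ T.preorderAux 0 = List.ofFn fun i => (σ i : ℕ) + 1

/-- `SkewSim σ τ` (written `σ ∼ τ` in the paper): `τ` is obtained from `σ` (lists,
0-indexed) by a skew transposition: for some position `i`, `σ(i)` and `σ(i+1)` are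
respectively the min and the max (or the max and the min) of the suffix starting at
position `i`, and `τ` is `σ` with the entries at positions `i` and `i+1` swapped. -/
def SkewSim (σ τ : List ℕ) : Prop :=
  ∃ i : ℕ, i + 1 < σ.length ∧
    (((∀ x ∈ σ.drop i, σ.getD i 0 ≤ x) ∧ (∀ x ∈ σ.drop i, x ≤ σ.getD (i+1) 0)) ∨
     ((∀ x ∈ σ.drop i, x ≤ σ.getD i 0) ∧ (∀ x ∈ σ.drop i, σ.getD (i+1) 0 ≤ x))) ∧
    τ = σ.take i ++ [σ.getD (i+1) 0, σ.getD i 0] ++ σ.drop (i+2)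

/-- The tree polynomial of a full binary tree: the sum over all leaves of `x^a y^b`,
where `a` (resp. `b`) is the number of left (resp. right) edges on the root-to-leaf
path.  `X 0` plays the role of `x` and `X 1` the role of `y`. -/
noncomputable def treePoly : FBT → MvPolynomial (Fin 2) ℕ
  | FBT.leaf => 1
  | FBT.node l r => MvPolynomial.X 0 * treePoly l + MvPolynomial.X 1 * treePoly r

/-!
A skew tree with `n` internal nodes is turned into the left comb by at most `n.choose 2` skew
rotations: comb its unique internal subtree recursively; if that subtree hangs on the right,
rotate left at the root and sink the remaining leaf down the comb in `n - 1` more rotations.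
Rotations are reversible, so going through the left comb joins `T1` to `T2` in at most
`2 * n.choose 2 = n * (n - 1) ≤ n ^ 2` rotations.
-/

open FBT

lemma FBT.skew_leftComb : ∀ n, (leftComb n).skew
  | 0 => trivial
  | n + 1 => ⟨Or.inr rfl, skew_leftComb n, trivial⟩

lemma Rot.symm {A B : FBT} (h : Rot A B) : Rot B A := by
  induction h with
  | rotR C D E => exact rotL C D E
  | rotL C D E => exact rotR C D E
  | congrL r _ ih => exact congrL r ih
  | congrR l _ ih => exact congrR l ih

namespace RotChainP

variable {P : FBT → Prop}

lemma trans {j k : ℕ} {A B C : FBT} (hAB : RotChainP P j A B) (hBC : RotChainP P k B C) :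
    RotChainP P (j + k) A C := by
  induction j generalizing A with
  | zero => cases hAB; simpa using hBC
  | succ j ih =>
    obtain ⟨T, hAT, hT, hTB⟩ := hAB
    rw [Nat.add_right_comm]
    exact ⟨T, hAT, hT, ih hTB⟩

lemma symm {k : ℕ} {A B : FBT} (h : RotChainP P k A B) (hA : P A) : RotChainP P k B A := by
  induction k generalizing A with
  | zero => exact Eq.symm h
  | succ k ih =>
    obtain ⟨T, hAT, hT, hTB⟩ := h
    exact (ih hTB hT).trans ⟨A, hAT.symm, hA, rfl⟩

lemma map {Q : FBT → Prop} (f : FBT → FBT) (hf : ∀ {A B}, Rot A B → Rot (f A) (f B))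
    (hPQ : ∀ {A}, P A → Q (f A)) {k : ℕ} {A B : FBT} (h : RotChainP P k A B) :
    RotChainP Q k (f A) (f B) := by
  induction k generalizing A with
  | zero => exact congrArg f (h : A = B)
  | succ k ih =>
    obtain ⟨T, hAT, hT, hTB⟩ := h
    exact ⟨f T, hf hAT, hPQ hT, ih hTB⟩

lemma node_leaf {k : ℕ} {A B : FBT} (h : RotChainP skew k A B) :
    RotChainP skew k (node A leaf) (node B leaf) :=
  h.map (node · leaf) (Rot.congrL leaf) fun hT => ⟨Or.inr rfl, hT, trivial⟩

lemma leaf_node {k : ℕ} {A B : FBT} (h : RotChainP skew k A B) :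
    RotChainP skew k (node leaf A) (node leaf B) :=
  h.map (node leaf ·) (Rot.congrR leaf) fun hT => ⟨Or.inl rfl, trivial, hT⟩

end RotChainP

lemma rotChainP_leaf_node_leftComb (m : ℕ) :
    RotChainP skew m (node leaf (leftComb m)) (leftComb (m + 1)) := by
  induction m with
  | zero => rfl
  | succ m ih =>
    exact ⟨node (node leaf (leftComb m)) leaf, Rot.rotL leaf (leftComb m) leaf,
      ⟨Or.inr rfl, ⟨Or.inl rfl, trivial, skew_leftComb m⟩, trivial⟩, ih.node_leaf⟩

lemma Nat.succ_choose_two (n : ℕ) : (n + 1).choose 2 = n.choose 2 + n := by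
  rw [Nat.choose_succ_succ', Nat.choose_one_right, add_comm]

lemma FBT.skew.exists_rotChainP_leftComb {T : FBT} (hT : T.skew) :
    ∃ k ≤ T.internal.choose 2, RotChainP skew k T (leftComb T.internal) := by
  induction T with
  | leaf => exact ⟨0, le_rfl, rfl⟩
  | node l r ihl ihr =>
    obtain ⟨hleaf | hleaf, hl, hr⟩ := hT
    · subst hleaf
      obtain ⟨k, hk, hchain⟩ := ihr hr
      refine ⟨k + r.internal, ?_, ?_⟩
      · simp only [internal, zero_add, Nat.succ_choose_two]
        omega
      · simpa [internal] using hchain.leaf_node.trans (rotChainP_leaf_node_leftComb _)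
    · subst hleaf
      obtain ⟨k, hk, hchain⟩ := ihl hl
      refine ⟨k, ?_, ?_⟩
      · simp only [internal, add_zero, Nat.succ_choose_two]
        omega
      · simpa [internal, leftComb] using hchain.node_leaf

lemma Nat.two_mul_choose_two_le_sq (n : ℕ) : 2 * n.choose 2 ≤ n ^ 2 :=
  calc 2 * n.choose 2 ≤ n * (n - 1) := by
        rw [Nat.choose_two_right]; exact Nat.mul_div_le _ _
    _ ≤ n ^ 2 := by rw [sq]; exact Nat.mul_le_mul_left n (Nat.sub_le n 1)

/-- for any two full skew trees with `n` internal nodes each, there is a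
sequence of at most `n²` rotations from one to the other in which every
intermediate tree is also a full skew tree. -/
theorem skew_rotation_distance_le_n_sq (n : ℕ) (T1 T2 : FBT)
    (h1 : T1.internal = n) (h2 : T2.internal = n)
    (hs1 : T1.skew) (hs2 : T2.skew) :
    ∃ k ≤ n ^ 2, RotChainP FBT.skew k T1 T2 := by
  obtain ⟨k₁, hk₁, chain₁⟩ := hs1.exists_rotChainP_leftComb
  obtain ⟨k₂, hk₂, chain₂⟩ := hs2.exists_rotChainP_leftComb
  rw [h1] at hk₁ chain₁
  rw [h2] at hk₂ chain₂
  have := Nat.two_mul_choose_two_le_sq n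
  exact ⟨k₁ + k₂, by omega, chain₁.trans (chain₂.symm hs2)⟩
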